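/- Let $0<p_1\le u_1<\infty$, $0<p_2\le u_2<\infty$ and $j\in\mathbb{N}_0$, and consider the identity operator $\mathrm{id}_j: m^{2^{jd}}_{u_1,p_1}\to m^{2^{jd}}_{u_2,p_2}$ between the finite-dimensional Morrey sequence spaces on the cube $Q_{-j,0}$. Then its operator norm satisfies: $\|\mathrm{id}_j\|=1$ if ($p_1\ge p_2$ and $u_2\ge u_1$) or ($p_1<p_2$ and $p_2/u_2\le p_1/u_1$); $\|\mathrm{id}_j\|=2^{jd(1/u_2-1/u_1)}$ if $p_1\ge p_2$ and $u_2<u_1$; and in the remaining case $p_1<p_2$ and $p_2/u_2>p_1/u_1$ there exists a constant $c\in(0,1]$ independent of $j$ with $c\,2^{jd(1/u_2-p_1/(u_1p_2))}\le\|\mathrm{id}_j\|\le 2^{jd(1/u_2-p_1/(u_1p_2))}$. -/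

import Mathlib

/-!
Every cube term of the target norm is controlled by the source norm. For `p₂ ≤ p₁` this is the
power-mean inequality on the `2^{νd}` points of the cube. For `p₁ ≤ p₂` the unit cubes force
`|λ_k| ≤ 1`, so `∑ |λ_k|^{p₂} ≤ ∑ |λ_k|^{p₁}`. Either way each cube term is at most
`|Q_{-ν,m}|^A` for an explicit exponent `A`, so the operator norm is at most `max 1 (2^{jdA})`.

The matching lower bounds come from three test sequences: a unit mass at one point, a constant
on `Q_{-j,0}`, and the indicator of the lattice `(2^s ℤ)^d` with `s = ⌈j p₁ / u₁⌉`. This lattice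
is sparse enough to have norm at most `1` in `m_{u₁,p₁}`, but on the whole cube `Q_{-j,0}` its
`m_{u₂,p₂}` cube term is large.
-/

open scoped ENNReal NNReal BigOperators
open Filter

/-- The unit cube `Q_{0,k}` is contained in the dyadic cube `Q_{-j,m}` of side length `2^j`. -/
def inDyadic (d j : ℕ) (m k : Fin d → ℤ) : Prop :=
  ∀ i, 2 ^ j * m i ≤ k i ∧ k i < 2 ^ j * (m i + 1)

/-- The Morrey sequence space quasi-norm `‖λ | m_{u,p}(ℤ^d)‖`, with values in `ℝ≥0∞`. -/
noncomputable def morreyNorm (d : ℕ) (u p : ℝ) (lam : (Fin d → ℤ) → ℂ) : ℝ≥0∞ :=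
  ⨆ (j : ℕ) (m : Fin d → ℤ),
    ((2 : ℝ≥0∞) ^ (j * d)) ^ (1 / u - 1 / p) *
      (∑' k : {k : Fin d → ℤ // inDyadic d j m k}, (‖lam k.1‖₊ : ℝ≥0∞) ^ p) ^ (1 / p)

/-- The `ℓ_r(ℤ^d)` norm. -/
noncomputable def lpNorm (d : ℕ) (r : ℝ) (lam : (Fin d → ℤ) → ℂ) : ℝ≥0∞ :=
  (∑' k : Fin d → ℤ, (‖lam k‖₊ : ℝ≥0∞) ^ r) ^ (1 / r)

/-- The `ℓ_∞(ℤ^d)` norm. -/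
noncomputable def lInftyNorm (d : ℕ) (lam : (Fin d → ℤ) → ℂ) : ℝ≥0∞ :=
  ⨆ k : Fin d → ℤ, (‖lam k‖₊ : ℝ≥0∞)

/-- The weak Lorentz `ℓ_{u,∞}(ℤ^d)` norm, via the distribution function. -/
noncomputable def weakNorm (d : ℕ) (u : ℝ) (lam : (Fin d → ℤ) → ℂ) : ℝ≥0∞ :=
  ⨆ t : ℝ≥0, (t : ℝ≥0∞) *
    (∑' _ : {k : Fin d → ℤ // (t : ℝ) < ‖lam k‖}, (1 : ℝ≥0∞)) ^ (1 / u)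

/-- The norm of the level-`j` space `X^{(j)}_{u,p}(ℤ^d)`. -/
noncomputable def XjNorm (d : ℕ) (u p p' : ℝ) (j : ℕ) (lam : (Fin d → ℤ) → ℂ) : ℝ≥0∞ :=
  ((2 : ℝ≥0∞) ^ (j * d)) ^ (1 / p - 1 / u) *
    ∑' m : Fin d → ℤ,
      (∑' k : {k : Fin d → ℤ // inDyadic d j m k}, (‖lam k.1‖₊ : ℝ≥0∞) ^ p') ^ (1 / p')

/-- The norm of `X_{u,p}(ℤ^d)`: infimum over decompositions `λ = ∑_j λ^{(j)}`. -/
noncomputable def XupNorm (d : ℕ) (u p p' : ℝ) (lam : (Fin d → ℤ) → ℂ) : ℝ≥0∞ :=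
  ⨅ (L : ℕ → (Fin d → ℤ) → ℂ) (_ : ∀ k, HasSum (fun j => L j k) (lam k)),
    ∑' j : ℕ, XjNorm d u p p' j (L j)

/-- Membership in `m_{u,p}(ℤ^d)`. -/
def MemMorrey (d : ℕ) (u p : ℝ) (lam : (Fin d → ℤ) → ℂ) : Prop :=
  morreyNorm d u p lam ≠ ⊤

/-- Membership in `m^{00}_{u,p}(ℤ^d)`, the closure of the finitely supported sequences. -/
def MemMorrey00 (d : ℕ) (u p : ℝ) (lam : (Fin d → ℤ) → ℂ) : Prop :=
  MemMorrey d u p lam ∧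
    ∀ ε : ℝ≥0∞, 0 < ε → ∃ mu : (Fin d → ℤ) → ℂ,
      (Function.support mu).Finite ∧ morreyNorm d u p (lam - mu) < ε

/-- `Q_{-ν,m} ⊆ Q_{-j,0}` for dyadic cubes. -/
def subCube (d j ν : ℕ) (m : Fin d → ℤ) : Prop :=
  ν ≤ j ∧ ∀ i, 0 ≤ m i ∧ 2 ^ ν * (m i + 1) ≤ 2 ^ j

/-- Norm of the finite-dimensional Morrey space `m^{2^{jd}}_{u,p}` on the cube `Q_{-j,0}`. -/
noncomputable def finMorreyNorm (d : ℕ) (u p : ℝ) (j : ℕ) (lam : (Fin d → ℤ) → ℂ) : ℝ≥0∞ :=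
  ⨆ (ν : ℕ) (m : Fin d → ℤ) (_ : subCube d j ν m),
    ((2 : ℝ≥0∞) ^ (ν * d)) ^ (1 / u - 1 / p) *
      (∑' k : {k : Fin d → ℤ // inDyadic d ν m k}, (‖lam k.1‖₊ : ℝ≥0∞) ^ p) ^ (1 / p)

/-- Operator norm of `id_j : m^{2^{jd}}_{u₁,p₁} → m^{2^{jd}}_{u₂,p₂}`. -/
noncomputable def morreyOpNorm (d : ℕ) (u₁ p₁ u₂ p₂ : ℝ) (j : ℕ) : ℝ≥0∞ :=
  ⨆ (lam : (Fin d → ℤ) → ℂ) (_ : finMorreyNorm d u₁ p₁ j lam ≤ 1),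
    finMorreyNorm d u₂ p₂ j lam

open Finset

theorem ENNReal.sum_rpow_one_div_le_card_rpow_mul {ι : Type*} (s : Finset ι) (f : ι → ℝ≥0∞)
    {q p : ℝ} (hq : 0 < q) (hqp : q ≤ p) :
    (∑ i ∈ s, f i ^ q) ^ (1 / q) ≤
      (#s : ℝ≥0∞) ^ (1 / q - 1 / p) * (∑ i ∈ s, f i ^ p) ^ (1 / p) := by
  have hp : 0 < p := hq.trans_le hqp
  have hr : 1 ≤ p / q := (one_le_div hq).2 hqp
  have key := ENNReal.rpow_le_rpow
    (ENNReal.rpow_sum_le_const_mul_sum_rpow s (fun i => f i ^ q) hr) (one_div_nonneg.2 hp.le)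
  simp only [← ENNReal.rpow_mul, mul_div_cancel₀ p hq.ne'] at key
  rw [ENNReal.mul_rpow_of_nonneg _ _ (one_div_nonneg.2 hp.le), ← ENNReal.rpow_mul] at key
  convert key using 3 <;> field_simp

theorem ENNReal.rpow_le_one_of_one_le_of_nonpos {x : ℝ≥0∞} {z : ℝ} (hx : 1 ≤ x) (hz : z ≤ 0) :
    x ^ z ≤ 1 := by
  simpa using ENNReal.rpow_le_rpow_of_exponent_le hx hz

theorem two_pow_ne_zero (n : ℕ) : (2 : ℝ≥0∞) ^ n ≠ 0 := pow_ne_zero n two_ne_zero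

theorem two_pow_ne_top (n : ℕ) : (2 : ℝ≥0∞) ^ n ≠ ⊤ := ENNReal.pow_ne_top ENNReal.ofNat_ne_top

theorem two_pow_rpow_mul_rpow (n : ℕ) (a b : ℝ) :
    ((2 : ℝ≥0∞) ^ n) ^ a * ((2 : ℝ≥0∞) ^ n) ^ b = ((2 : ℝ≥0∞) ^ n) ^ (a + b) :=
  (ENNReal.rpow_add a b (two_pow_ne_zero n) (two_pow_ne_top n)).symm

theorem two_pow_rpow_mul_two_pow_rpow (n₁ n₂ : ℕ) (a b : ℝ) :
    ((2 : ℝ≥0∞) ^ n₁) ^ a * ((2 : ℝ≥0∞) ^ n₂) ^ b = 2 ^ ((n₁ : ℝ) * a + n₂ * b) := by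
  simp only [← ENNReal.rpow_natCast, ← ENNReal.rpow_mul]
  exact (ENNReal.rpow_add _ _ two_ne_zero ENNReal.ofNat_ne_top).symm

noncomputable def dyadicCube (d ν : ℕ) (m : Fin d → ℤ) : Finset (Fin d → ℤ) :=
  Fintype.piFinset fun i => Ico (2 ^ ν * m i) (2 ^ ν * (m i + 1))

def dyadicLattice (d s : ℕ) : Set (Fin d → ℤ) :=
  {k | ∀ i, (2 : ℤ) ^ s ∣ k i}

instance (d s : ℕ) : DecidablePred (· ∈ dyadicLattice d s) :=
  fun k => inferInstanceAs (Decidable (∀ i, (2 : ℤ) ^ s ∣ k i))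

theorem toNat_two_pow_mul_add_one_sub (n : ℕ) (a : ℤ) :
    (2 ^ n * (a + 1) - 2 ^ n * a).toNat = 2 ^ n := by
  rw [mul_add_one, add_sub_cancel_left]
  exact_mod_cast Int.toNat_natCast (2 ^ n)

theorem card_filter_dvd_Ico {ν s : ℕ} (hs : s ≤ ν) (a : ℤ) :
    #{x ∈ Ico (2 ^ ν * a) (2 ^ ν * (a + 1)) | (2 : ℤ) ^ s ∣ x} = 2 ^ (ν - s) := by
  have hdiv (b : ℤ) : ((2 ^ ν * b : ℤ) : ℚ) / ((2 ^ s : ℤ) : ℚ) = ((2 ^ (ν - s) * b : ℤ) : ℚ) := by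
    rw [div_eq_iff (by positivity), ← Int.cast_mul, mul_right_comm, ← pow_add,
      Nat.sub_add_cancel hs]
  rw [Int.Ico_filter_dvd_eq _ _ (by positivity), card_map, Int.card_Ico, hdiv, hdiv,
    Int.ceil_intCast, Int.ceil_intCast, toNat_two_pow_mul_add_one_sub]

theorem card_filter_dvd_Ico_le (ν s : ℕ) (a : ℤ) :
    #{x ∈ Ico (2 ^ ν * a) (2 ^ ν * (a + 1)) | (2 : ℤ) ^ s ∣ x} ≤ 2 ^ (ν - s) := by
  rcases le_total s ν with hs | hs
  · exact (card_filter_dvd_Ico hs a).le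
  rw [Nat.sub_eq_zero_of_le hs, pow_zero, card_le_one]
  intro x hx y hy
  simp only [mem_filter, mem_Ico] at hx hy
  have : (2 : ℤ) ^ ν ≤ 2 ^ s := pow_le_pow_right₀ one_le_two hs
  have := Int.eq_zero_of_abs_lt_dvd (dvd_sub hx.2 hy.2)
    (abs_sub_lt_iff.2 ⟨by linarith, by linarith⟩)
  linarith

section DyadicCube

variable {d ν : ℕ} {m : Fin d → ℤ}

theorem mem_dyadicCube {k : Fin d → ℤ} : k ∈ dyadicCube d ν m ↔ inDyadic d ν m k := by
  simp [dyadicCube, inDyadic]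

theorem tsum_inDyadic (f : (Fin d → ℤ) → ℝ≥0∞) :
    ∑' k : {k : Fin d → ℤ // inDyadic d ν m k}, f k = ∑ k ∈ dyadicCube d ν m, f k := by
  rw [← Finset.tsum_subtype]
  exact (Equiv.subtypeEquivRight fun _ => mem_dyadicCube).symm.tsum_eq fun k => f k.1

theorem card_dyadicCube : #(dyadicCube d ν m) = 2 ^ (ν * d) := by
  simp [dyadicCube, Int.card_Ico, toNat_two_pow_mul_add_one_sub, pow_mul]

theorem dyadicCube_zero : dyadicCube d 0 m = {m} := by
  ext k
  simp only [dyadicCube, Fintype.mem_piFinset, mem_Ico, mem_singleton, funext_iff]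
  exact forall_congr' fun i => by omega

theorem filter_dyadicCube_dyadicLattice (s : ℕ) :
    {k ∈ dyadicCube d ν m | k ∈ dyadicLattice d s} =
      Fintype.piFinset fun i => {x ∈ Ico (2 ^ ν * m i) (2 ^ ν * (m i + 1)) | (2 : ℤ) ^ s ∣ x} := by
  ext k
  rw [mem_filter]
  simp [dyadicCube, dyadicLattice, forall_and]

theorem card_filter_dyadicLattice_le (s : ℕ) :
    #{k ∈ dyadicCube d ν m | k ∈ dyadicLattice d s} ≤ 2 ^ ((ν - s) * d) := by
  rw [filter_dyadicCube_dyadicLattice, Fintype.card_piFinset, pow_mul]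
  exact (prod_le_prod' fun i _ => card_filter_dvd_Ico_le ν s (m i)).trans (by simp)

theorem card_filter_dyadicLattice {s : ℕ} (hs : s ≤ ν) :
    #{k ∈ dyadicCube d ν m | k ∈ dyadicLattice d s} = 2 ^ ((ν - s) * d) := by
  simp [filter_dyadicCube_dyadicLattice, card_filter_dvd_Ico hs, pow_mul]

end DyadicCube

noncomputable def cubeTerm (d : ℕ) (u p : ℝ) (ν : ℕ) (m : Fin d → ℤ)
    (lam : (Fin d → ℤ) → ℂ) : ℝ≥0∞ :=
  ((2 : ℝ≥0∞) ^ (ν * d)) ^ (1 / u - 1 / p) *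
    (∑ k ∈ dyadicCube d ν m, (‖lam k‖₊ : ℝ≥0∞) ^ p) ^ (1 / p)

section CubeTerm

variable {d j ν : ℕ} {u p : ℝ} {m : Fin d → ℤ} {lam : (Fin d → ℤ) → ℂ}

theorem finMorreyNorm_eq_iSup_cubeTerm :
    finMorreyNorm d u p j lam = ⨆ (ν) (m) (_ : subCube d j ν m), cubeTerm d u p ν m lam := by
  refine iSup_congr fun ν => iSup_congr fun m => iSup_congr fun _ => ?_
  rw [cubeTerm, ← tsum_inDyadic fun k => (‖lam k‖₊ : ℝ≥0∞) ^ p]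

theorem cubeTerm_le_finMorreyNorm (h : subCube d j ν m) :
    cubeTerm d u p ν m lam ≤ finMorreyNorm d u p j lam := by
  rw [finMorreyNorm_eq_iSup_cubeTerm]
  exact le_iSup₂_of_le ν m (le_iSup_of_le h le_rfl)

theorem finMorreyNorm_le_iff {c : ℝ≥0∞} :
    finMorreyNorm d u p j lam ≤ c ↔ ∀ ν m, subCube d j ν m → cubeTerm d u p ν m lam ≤ c := by
  simp only [finMorreyNorm_eq_iSup_cubeTerm, iSup_le_iff]

theorem subCube_self : subCube d j j 0 :=
  ⟨le_rfl, fun _ => by simp⟩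

theorem subCube_zero : subCube d j 0 0 :=
  ⟨Nat.zero_le _, fun _ => by simp [one_le_pow₀]⟩

theorem subCube.zero_of_mem (h : subCube d j ν m) {k : Fin d → ℤ} (hk : k ∈ dyadicCube d ν m) :
    subCube d j 0 k := by
  refine ⟨Nat.zero_le _, fun i => ?_⟩
  have hm := h.2 i
  have hki := mem_dyadicCube.1 hk i
  have : 0 ≤ 2 ^ ν * m i := mul_nonneg (by positivity) hm.1
  constructor <;> linarith [hki.1, hki.2]

theorem cubeTerm_zero (hp : p ≠ 0) : cubeTerm d u p 0 m lam = ‖lam m‖₊ := by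
  simp [cubeTerm, dyadicCube_zero, ENNReal.rpow_rpow_inv hp]

theorem sum_rpow_le_of_cubeTerm_le_one (hp : 0 < p) (h : cubeTerm d u p ν m lam ≤ 1) :
    ∑ k ∈ dyadicCube d ν m, (‖lam k‖₊ : ℝ≥0∞) ^ p ≤ ((2 : ℝ≥0∞) ^ (ν * d)) ^ (1 - p / u) := by
  set N := (2 : ℝ≥0∞) ^ (ν * d)
  set S := ∑ k ∈ dyadicCube d ν m, (‖lam k‖₊ : ℝ≥0∞) ^ p
  have hS : S ^ p⁻¹ ≤ N ^ (1 / p - 1 / u) :=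
    calc S ^ p⁻¹ = N ^ (1 / p - 1 / u) * (N ^ (1 / u - 1 / p) * S ^ (1 / p)) := by
          rw [← mul_assoc, two_pow_rpow_mul_rpow]; simp
      _ ≤ N ^ (1 / p - 1 / u) := mul_le_of_le_one_right' h
  rw [ENNReal.rpow_inv_le_iff hp, ← ENNReal.rpow_mul] at hS
  convert hS using 2
  field_simp

theorem nnnorm_le_one_of_finMorreyNorm_le_one (hp : p ≠ 0) (h : finMorreyNorm d u p j lam ≤ 1)
    (hsub : subCube d j ν m) {k : Fin d → ℤ} (hk : k ∈ dyadicCube d ν m) :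
    (‖lam k‖₊ : ℝ≥0∞) ≤ 1 := by
  rw [← cubeTerm_zero (u := u) hp]
  exact (cubeTerm_le_finMorreyNorm (hsub.zero_of_mem hk)).trans h

end CubeTerm

section Bounds

variable {d j ν : ℕ} {u₁ p₁ u₂ p₂ : ℝ} {m : Fin d → ℤ} {lam : (Fin d → ℤ) → ℂ}

theorem cubeTerm_le_of_le (hp₂ : 0 < p₂) (h : p₂ ≤ p₁) :
    cubeTerm d u₂ p₂ ν m lam ≤
      ((2 : ℝ≥0∞) ^ (ν * d)) ^ (1 / u₂ - 1 / u₁) * cubeTerm d u₁ p₁ ν m lam := by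
  have hmean := ENNReal.sum_rpow_one_div_le_card_rpow_mul (dyadicCube d ν m)
    (fun k => (‖lam k‖₊ : ℝ≥0∞)) hp₂ h
  rw [card_dyadicCube, Nat.cast_pow, Nat.cast_ofNat] at hmean
  set N := (2 : ℝ≥0∞) ^ (ν * d)
  calc cubeTerm d u₂ p₂ ν m lam
      ≤ N ^ (1 / u₂ - 1 / p₂) *
          (N ^ (1 / p₂ - 1 / p₁) *
            (∑ k ∈ dyadicCube d ν m, (‖lam k‖₊ : ℝ≥0∞) ^ p₁) ^ (1 / p₁)) := by
        rw [cubeTerm]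
        gcongr
    _ = _ := by
      rw [cubeTerm, ← mul_assoc, ← mul_assoc, two_pow_rpow_mul_rpow, two_pow_rpow_mul_rpow]
      ring_nf

theorem cubeTerm_le_of_ge (hp₁ : 0 < p₁) (h : p₁ ≤ p₂)
    (hlam : ∀ k ∈ dyadicCube d ν m, (‖lam k‖₊ : ℝ≥0∞) ≤ 1) (h₁ : cubeTerm d u₁ p₁ ν m lam ≤ 1) :
    cubeTerm d u₂ p₂ ν m lam ≤ ((2 : ℝ≥0∞) ^ (ν * d)) ^ (1 / u₂ - p₁ / (u₁ * p₂)) := by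
  have hS : ∑ k ∈ dyadicCube d ν m, (‖lam k‖₊ : ℝ≥0∞) ^ p₂ ≤
      ((2 : ℝ≥0∞) ^ (ν * d)) ^ (1 - p₁ / u₁) :=
    (sum_le_sum fun k hk => ENNReal.rpow_le_rpow_of_exponent_ge (hlam k hk) h).trans
      (sum_rpow_le_of_cubeTerm_le_one hp₁ h₁)
  calc cubeTerm d u₂ p₂ ν m lam
      ≤ ((2 : ℝ≥0∞) ^ (ν * d)) ^ (1 / u₂ - 1 / p₂) *
          (((2 : ℝ≥0∞) ^ (ν * d)) ^ (1 - p₁ / u₁)) ^ (1 / p₂) := by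
        rw [cubeTerm]
        have : 0 < p₂ := hp₁.trans_le h
        gcongr
    _ = _ := by
      rw [← ENNReal.rpow_mul, two_pow_rpow_mul_rpow]
      ring_nf

theorem morreyOpNorm_le_of_cubeTerm_le {A : ℝ}
    (h : ∀ lam, finMorreyNorm d u₁ p₁ j lam ≤ 1 → ∀ ν m, subCube d j ν m →
      cubeTerm d u₂ p₂ ν m lam ≤ ((2 : ℝ≥0∞) ^ (ν * d)) ^ A) :
    morreyOpNorm d u₁ p₁ u₂ p₂ j ≤ ((2 : ℝ≥0∞) ^ (j * d)) ^ max A 0 := by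
  refine iSup₂_le fun lam hlam => finMorreyNorm_le_iff.2 fun ν m hsub =>
    (h lam hlam ν m hsub).trans ?_
  calc ((2 : ℝ≥0∞) ^ (ν * d)) ^ A ≤ ((2 : ℝ≥0∞) ^ (ν * d)) ^ max A 0 :=
        ENNReal.rpow_le_rpow_of_exponent_le (one_le_pow₀ one_le_two) (le_max_left _ _)
    _ ≤ ((2 : ℝ≥0∞) ^ (j * d)) ^ max A 0 := by
        gcongr
        · exact one_le_two
        · exact hsub.1

theorem morreyOpNorm_le_of_le (hp₂ : 0 < p₂) (h : p₂ ≤ p₁) :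
    morreyOpNorm d u₁ p₁ u₂ p₂ j ≤ ((2 : ℝ≥0∞) ^ (j * d)) ^ max (1 / u₂ - 1 / u₁) 0 :=
  morreyOpNorm_le_of_cubeTerm_le fun _ hlam _ _ hsub =>
    (cubeTerm_le_of_le hp₂ h).trans
      (mul_le_of_le_one_right' ((cubeTerm_le_finMorreyNorm hsub).trans hlam))

theorem morreyOpNorm_le_of_ge (hp₁ : 0 < p₁) (h : p₁ ≤ p₂) :
    morreyOpNorm d u₁ p₁ u₂ p₂ j ≤ ((2 : ℝ≥0∞) ^ (j * d)) ^ max (1 / u₂ - p₁ / (u₁ * p₂)) 0 :=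
  morreyOpNorm_le_of_cubeTerm_le fun _ hlam _ _ hsub =>
    cubeTerm_le_of_ge hp₁ h
      (fun _ hk => nnnorm_le_one_of_finMorreyNorm_le_one hp₁.ne' hlam hsub hk)
      ((cubeTerm_le_finMorreyNorm hsub).trans hlam)

end Bounds

section Witnesses

variable {d j ν : ℕ} {u p u₁ p₁ u₂ p₂ : ℝ} {m : Fin d → ℤ}

theorem le_morreyOpNorm {lam : (Fin d → ℤ) → ℂ} (h : finMorreyNorm d u₁ p₁ j lam ≤ 1) :
    finMorreyNorm d u₂ p₂ j lam ≤ morreyOpNorm d u₁ p₁ u₂ p₂ j :=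
  le_iSup₂_of_le lam h le_rfl

theorem cubeTerm_indicator_one (hp : 0 < p) (A : Set (Fin d → ℤ)) [DecidablePred (· ∈ A)] :
    cubeTerm d u p ν m (A.indicator 1) =
      ((2 : ℝ≥0∞) ^ (ν * d)) ^ (1 / u - 1 / p) *
        (#{k ∈ dyadicCube d ν m | k ∈ A} : ℝ≥0∞) ^ (1 / p) := by
  have hA (k : Fin d → ℤ) :
      (‖A.indicator (1 : (Fin d → ℤ) → ℂ) k‖₊ : ℝ≥0∞) ^ p = if k ∈ A then 1 else 0 := by
    by_cases hk : k ∈ A <;> simp [hk, ENNReal.zero_rpow_of_pos hp]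
  simp only [cubeTerm, hA, sum_boole]

theorem cubeTerm_const (hp : 0 < p) (c : ℂ) :
    cubeTerm d u p ν m (fun _ => c) = ((2 : ℝ≥0∞) ^ (ν * d)) ^ (1 / u) * ‖c‖₊ := by
  rw [cubeTerm, sum_const, card_dyadicCube, nsmul_eq_mul, Nat.cast_pow, Nat.cast_ofNat,
    ENNReal.mul_rpow_of_nonneg _ _ (one_div_nonneg.2 hp.le), ← mul_assoc, two_pow_rpow_mul_rpow,
    sub_add_cancel, ← ENNReal.rpow_mul, mul_one_div_cancel hp.ne', ENNReal.rpow_one]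

theorem finMorreyNorm_const (hp : 0 < p) (hu : 0 ≤ u) (c : ℂ) :
    finMorreyNorm d u p j (fun _ => c) = ((2 : ℝ≥0∞) ^ (j * d)) ^ (1 / u) * ‖c‖₊ := by
  refine le_antisymm (finMorreyNorm_le_iff.2 fun ν m hsub => ?_) ?_
  · rw [cubeTerm_const hp]
    gcongr
    · exact one_le_two
    · exact hsub.1
  · rw [← cubeTerm_const (m := 0) hp]
    exact cubeTerm_le_finMorreyNorm subCube_self

theorem one_le_morreyOpNorm (hp₁ : 0 < p₁) (hpu₁ : p₁ ≤ u₁) (hp₂ : p₂ ≠ 0) :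
    1 ≤ morreyOpNorm d u₁ p₁ u₂ p₂ j := by
  set δ : (Fin d → ℤ) → ℂ := ({0} : Set (Fin d → ℤ)).indicator 1
  have hδ₁ : finMorreyNorm d u₁ p₁ j δ ≤ 1 := finMorreyNorm_le_iff.2 fun ν m _ => by
    rw [cubeTerm_indicator_one hp₁]
    refine mul_le_one' (ENNReal.rpow_le_one_of_one_le_of_nonpos (one_le_pow₀ one_le_two)
      (sub_nonpos.2 (one_div_le_one_div_of_le hp₁ hpu₁))) (ENNReal.rpow_le_one ?_ (by positivity))
    exact_mod_cast card_le_one.2 fun a ha b hb => by simp_all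
  have hδ₂ : 1 ≤ finMorreyNorm d u₂ p₂ j δ :=
    calc (1 : ℝ≥0∞) = cubeTerm d u₂ p₂ 0 0 δ := by simp [cubeTerm_zero hp₂, δ]
      _ ≤ _ := cubeTerm_le_finMorreyNorm subCube_zero
  exact hδ₂.trans (le_morreyOpNorm hδ₁)

theorem two_pow_rpow_le_morreyOpNorm (hp₁ : 0 < p₁) (hu₁ : 0 ≤ u₁) (hp₂ : 0 < p₂)
    (hu₂ : 0 ≤ u₂) : ((2 : ℝ≥0∞) ^ (j * d)) ^ (1 / u₂ - 1 / u₁) ≤ morreyOpNorm d u₁ p₁ u₂ p₂ j := by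
  set N := (2 : ℝ≥0∞) ^ (j * d)
  have hx : N ^ (-(1 / u₁)) ≠ ⊤ :=
    ENNReal.rpow_ne_top_of_nonneg' (pos_iff_ne_zero.2 (two_pow_ne_zero _)) (two_pow_ne_top _)
  set c : ℂ := (((N ^ (-(1 / u₁))).toNNReal : ℝ) : ℂ)
  have hc : (‖c‖₊ : ℝ≥0∞) = N ^ (-(1 / u₁)) := by
    rw [Complex.nnnorm_real, NNReal.nnnorm_eq, ENNReal.coe_toNNReal hx]
  calc N ^ (1 / u₂ - 1 / u₁) = finMorreyNorm d u₂ p₂ j (fun _ => c) := by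
        rw [finMorreyNorm_const hp₂ hu₂, hc, two_pow_rpow_mul_rpow, sub_eq_add_neg]
    _ ≤ _ := le_morreyOpNorm <| le_of_eq <| by
        rw [finMorreyNorm_const hp₁ hu₁, hc, two_pow_rpow_mul_rpow, add_neg_cancel,
          ENNReal.rpow_zero]

theorem finMorreyNorm_indicator_dyadicLattice_le_one (hp : 0 < p) (hpu : p ≤ u) {s : ℕ}
    (hs : j * p / u ≤ s) : finMorreyNorm d u p j ((dyadicLattice d s).indicator 1) ≤ 1 := by
  have hu : 0 < u := hp.trans_le hpu
  refine finMorreyNorm_le_iff.2 fun ν m hsub => ?_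
  rw [cubeTerm_indicator_one hp]
  calc _ ≤ ((2 : ℝ≥0∞) ^ (ν * d)) ^ (1 / u - 1 / p) * ((2 : ℝ≥0∞) ^ ((ν - s) * d)) ^ (1 / p) := by
        gcongr
        exact_mod_cast card_filter_dyadicLattice_le s
    _ = 2 ^ (((ν * d : ℕ) : ℝ) * (1 / u - 1 / p) + ((ν - s) * d : ℕ) * (1 / p)) :=
        two_pow_rpow_mul_two_pow_rpow _ _ _ _
    _ ≤ 1 := by
      refine ENNReal.rpow_le_one_of_one_le_of_nonpos one_le_two ?_
      rcases le_total ν s with hνs | hsν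
      · rw [Nat.sub_eq_zero_of_le hνs, zero_mul, Nat.cast_zero, zero_mul, add_zero]
        exact mul_nonpos_of_nonneg_of_nonpos (by positivity)
          (sub_nonpos.2 (one_div_le_one_div_of_le hp hpu))
      · have hν : (ν : ℝ) ≤ j := by exact_mod_cast hsub.1
        have hνs : (ν : ℝ) / u ≤ s / p :=
          calc (ν : ℝ) / u ≤ j / u := by gcongr
            _ = j * p / u / p := by field_simp
            _ ≤ s / p := by gcongr
        push_cast [Nat.cast_sub hsν]
        calc (ν : ℝ) * d * (1 / u - 1 / p) + (ν - s) * d * (1 / p) = d * (ν / u - s / p) := by ring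
          _ ≤ 0 := mul_nonpos_of_nonneg_of_nonpos (by positivity) (by linarith)

theorem two_rpow_mul_two_pow_rpow_le_morreyOpNorm (hp₁ : 0 < p₁) (hpu₁ : p₁ ≤ u₁) (hp₂ : 0 < p₂) :
    (2 : ℝ≥0∞) ^ (-(d : ℝ) / p₂) * ((2 : ℝ≥0∞) ^ (j * d)) ^ (1 / u₂ - p₁ / (u₁ * p₂)) ≤
      morreyOpNorm d u₁ p₁ u₂ p₂ j := by
  have hu₁ : 0 < u₁ := hp₁.trans_le hpu₁
  set s := ⌈j * p₁ / u₁⌉₊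
  have hs₁ : j * p₁ / u₁ ≤ s := Nat.le_ceil _
  have hs₂ : s ≤ j := Nat.ceil_le.2 <|
    calc j * p₁ / u₁ ≤ j * u₁ / u₁ := by gcongr
      _ = j := by field_simp
  -- rounding `s` up to an integer costs the factor `2 ^ (-d / p₂)`
  have hs₃ : (s : ℝ) < j * p₁ / u₁ + 1 := Nat.ceil_lt_add_one (by positivity)
  calc _ ≤ cubeTerm d u₂ p₂ j 0 ((dyadicLattice d s).indicator 1) := by
        rw [cubeTerm_indicator_one hp₂, card_filter_dyadicLattice hs₂, Nat.cast_pow,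
          Nat.cast_ofNat, two_pow_rpow_mul_two_pow_rpow, ← ENNReal.rpow_natCast,
          ← ENNReal.rpow_mul, ← ENNReal.rpow_add _ _ two_ne_zero ENNReal.ofNat_ne_top]
        refine ENNReal.rpow_le_rpow_of_exponent_le one_le_two ?_
        have key : (s : ℝ) * (d / p₂) ≤ (j * p₁ / u₁ + 1) * (d / p₂) := by gcongr
        push_cast [Nat.cast_sub hs₂]
        linear_combination key
    _ ≤ finMorreyNorm d u₂ p₂ j ((dyadicLattice d s).indicator 1) :=
        cubeTerm_le_finMorreyNorm subCube_self
    _ ≤ _ := le_morreyOpNorm (finMorreyNorm_indicator_dyadicLattice_le_one hp₁ hpu₁ hs₁)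

end Witnesses

theorem finite_morrey_opNorm_general (d : ℕ) (u₁ p₁ u₂ p₂ : ℝ)
    (hp₁ : 0 < p₁) (hpu₁ : p₁ ≤ u₁) (hp₂ : 0 < p₂) (hpu₂ : p₂ ≤ u₂) (j : ℕ) :
    ((p₂ ≤ p₁ ∧ u₁ ≤ u₂) → morreyOpNorm d u₁ p₁ u₂ p₂ j = 1) ∧
    ((p₁ < p₂ ∧ p₂ / u₂ ≤ p₁ / u₁) → morreyOpNorm d u₁ p₁ u₂ p₂ j = 1) ∧
    ((p₂ ≤ p₁ ∧ u₂ < u₁) →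
      morreyOpNorm d u₁ p₁ u₂ p₂ j = ((2 : ℝ≥0∞) ^ (j * d)) ^ (1 / u₂ - 1 / u₁)) ∧
    ((p₁ < p₂ ∧ p₁ / u₁ < p₂ / u₂) →
      ∃ c : ℝ≥0∞, 0 < c ∧ c ≤ 1 ∧ ∀ j' : ℕ,
        c * ((2 : ℝ≥0∞) ^ (j' * d)) ^ (1 / u₂ - p₁ / (u₁ * p₂)) ≤
            morreyOpNorm d u₁ p₁ u₂ p₂ j' ∧
        morreyOpNorm d u₁ p₁ u₂ p₂ j' ≤
            ((2 : ℝ≥0∞) ^ (j' * d)) ^ (1 / u₂ - p₁ / (u₁ * p₂))) := by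
  have hu₁ : 0 < u₁ := hp₁.trans_le hpu₁
  have hu₂ : 0 < u₂ := hp₂.trans_le hpu₂
  have hexp : 1 / u₂ - p₁ / (u₁ * p₂) = (p₂ / u₂ - p₁ / u₁) / p₂ := by field_simp
  have hone : 1 ≤ morreyOpNorm d u₁ p₁ u₂ p₂ j := one_le_morreyOpNorm hp₁ hpu₁ hp₂.ne'
  refine ⟨fun ⟨h₁, h₂⟩ => ?_, fun ⟨h₁, h₂⟩ => ?_, fun ⟨h₁, h₂⟩ => ?_, fun ⟨h₁, h₂⟩ => ?_⟩
  · refine le_antisymm ((morreyOpNorm_le_of_le hp₂ h₁).trans_eq ?_) hone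
    rw [max_eq_right (sub_nonpos.2 (one_div_le_one_div_of_le hu₁ h₂)), ENNReal.rpow_zero]
  · refine le_antisymm ((morreyOpNorm_le_of_ge hp₁ h₁.le).trans_eq ?_) hone
    rw [max_eq_right (hexp ▸ div_nonpos_of_nonpos_of_nonneg (sub_nonpos.2 h₂) hp₂.le),
      ENNReal.rpow_zero]
  · refine le_antisymm ((morreyOpNorm_le_of_le hp₂ h₁).trans_eq ?_)
      (two_pow_rpow_le_morreyOpNorm hp₁ hu₁.le hp₂ hu₂.le)
    rw [max_eq_left (sub_nonneg.2 (one_div_le_one_div_of_le hu₂ h₂.le))]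
  · refine ⟨2 ^ (-(d : ℝ) / p₂), ENNReal.rpow_pos two_pos ENNReal.ofNat_ne_top,
      ENNReal.rpow_le_one_of_one_le_of_nonpos one_le_two
        (div_nonpos_of_nonpos_of_nonneg (neg_nonpos.2 d.cast_nonneg) hp₂.le), fun j' =>
      ⟨two_rpow_mul_two_pow_rpow_le_morreyOpNorm hp₁ hpu₁ hp₂,
        (morreyOpNorm_le_of_ge hp₁ h₁.le).trans_eq ?_⟩⟩
    rw [max_eq_left (hexp ▸ div_nonneg (sub_nonneg.2 h₂.le) hp₂.le)]

theorem finite_morrey_opNorm (d : ℕ) (hd : 0 < d) (u₁ p₁ u₂ p₂ : ℝ)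
    (hp₁ : 0 < p₁) (hpu₁ : p₁ ≤ u₁) (hp₂ : 0 < p₂) (hpu₂ : p₂ ≤ u₂) (j : ℕ) :
    ((p₂ ≤ p₁ ∧ u₁ ≤ u₂) → morreyOpNorm d u₁ p₁ u₂ p₂ j = 1) ∧
    ((p₁ < p₂ ∧ p₂ / u₂ ≤ p₁ / u₁) → morreyOpNorm d u₁ p₁ u₂ p₂ j = 1) ∧
    ((p₂ ≤ p₁ ∧ u₂ < u₁) →
      morreyOpNorm d u₁ p₁ u₂ p₂ j = ((2 : ℝ≥0∞) ^ (j * d)) ^ (1 / u₂ - 1 / u₁)) ∧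
    ((p₁ < p₂ ∧ p₁ / u₁ < p₂ / u₂) →
      ∃ c : ℝ≥0∞, 0 < c ∧ c ≤ 1 ∧ ∀ j' : ℕ,
        c * ((2 : ℝ≥0∞) ^ (j' * d)) ^ (1 / u₂ - p₁ / (u₁ * p₂)) ≤
            morreyOpNorm d u₁ p₁ u₂ p₂ j' ∧
        morreyOpNorm d u₁ p₁ u₂ p₂ j' ≤
            ((2 : ℝ≥0∞) ^ (j' * d)) ^ (1 / u₂ - p₁ / (u₁ * p₂))) :=
  finite_morrey_opNorm_general d u₁ p₁ u₂ p₂ hp₁ hpu₁ hp₂ hpu₂ j
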